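/- arXiv:2509.26512 — 8 statements merged into one kernel-verified Lean document; each statement's English description precedes it below -/
import Mathlib

section
/- For every even integer N ≥ 4, the identity 1 + ∑_{i=1}^{N/2 - 1} (N - 2i + 1)/(i! · 2^i) = N · ∑_{i=1}^{N/2} 1/(i! · 2^i) holds. -/
lemma tel_sum (m : ℕ) :
    ∑ i ∈ Finset.Icc 1 m, ((2 * i - 1 : ℚ)) / ((Nat.factorial i : ℚ) * 2 ^ i)
      = 1 - 1 / ((Nat.factorial m : ℚ) * 2 ^ m) := by
  induction m with
  | zero => simp
  | succ m ih =>
    rw [Finset.sum_Icc_succ_top (by omega), ih]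
    have h1 : (Nat.factorial m : ℚ) ≠ 0 := Nat.cast_ne_zero.2 (Nat.factorial_ne_zero m)
    have h2 : (2 : ℚ) ^ m ≠ 0 := by positivity
    rw [Nat.factorial_succ]
    push_cast
    field_simp
    ring

/-- For every even integer `N ≥ 4`,
`1 + ∑_{i=1}^{N/2-1} (N - 2i + 1)/(i!·2^i) = N · ∑_{i=1}^{N/2} 1/(i!·2^i)`. -/
theorem sum_factorial_identity_bipartite (N : ℕ) (hN : 4 ≤ N) (hEven : Even N) :
    1 + ∑ i ∈ Finset.Icc 1 (N / 2 - 1),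
        ((N : ℚ) - 2 * i + 1) / ((Nat.factorial i : ℚ) * 2 ^ i)
      = (N : ℚ) * ∑ i ∈ Finset.Icc 1 (N / 2), 1 / ((Nat.factorial i : ℚ) * 2 ^ i) := by
  obtain ⟨m, hm⟩ := hEven
  obtain ⟨k, hk⟩ : ∃ k, m = k + 1 := ⟨m - 1, by omega⟩
  have hN2 : N / 2 = k + 1 := by omega
  have hNk : N = 2 * (k + 1) := by omega
  rw [hN2, hNk]
  simp only [Nat.add_sub_cancel]
  rw [Finset.mul_sum, Finset.sum_Icc_succ_top (by omega : 1 ≤ k + 1)]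
  have key : ∀ i ∈ Finset.Icc 1 k,
      ((2 * (k + 1) : ℕ) : ℚ) * (1 / ((Nat.factorial i : ℚ) * 2 ^ i))
        = (((2 * (k + 1) : ℕ) : ℚ) - 2 * i + 1) / ((Nat.factorial i : ℚ) * 2 ^ i)
          + (2 * i - 1 : ℚ) / ((Nat.factorial i : ℚ) * 2 ^ i) := by
    intro i _
    rw [← add_div, mul_one_div]
    congr 1
    ring
  rw [Finset.sum_congr rfl key, Finset.sum_add_distrib, tel_sum]
  have h1 : (Nat.factorial k : ℚ) ≠ 0 := Nat.cast_ne_zero.2 (Nat.factorial_ne_zero k)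
  have h2 : (2 : ℚ) ^ k ≠ 0 := by positivity
  have hlast : ((2 * (k + 1) : ℕ) : ℚ) * (1 / ((Nat.factorial (k + 1) : ℚ) * 2 ^ (k + 1)))
      = 1 / ((Nat.factorial k : ℚ) * 2 ^ k) := by
    rw [Nat.factorial_succ]
    push_cast
    field_simp
    ring
  rw [hlast]
  ring
end

section
/- Fix an integer N ≥ 3 and define sequences x_k, z_k for 1 ≤ k ≤ N-1 by x_1 = z_1 = 1 and, for k ≤ ⌊N/2⌋ + 1: x_k = ((N-k+1)/2)·x_{k-1} + z_{k-1} and z_k = x_k - ((k-1)/2)·x_{k-1}; for k ≥ ⌊N/2⌋ + 2: x_k = ((k-1)/(2k-N))·(x_{k-1} + z_{k-1}) and z_k = 0. Then for all 1 ≤ k ≤ N-1 the sequence x_k is strictly positive and non-decreasing in k, and 0 ≤ z_k ≤ x_k for all 1 ≤ k ≤ N-2. -/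
/-!
Induct on `k` with the invariant `0 < x_k`, `0 ≤ z_k ≤ x_k`. For `k ≤ ⌊N/2⌋ + 1` the step is
`x_k = a x_{k-1} + z_{k-1}`, `z_k = (a - b) x_{k-1} + z_{k-1}` with `a = (N-k+1)/2 ≥ 1` and
`0 ≤ b = (k-1)/2 ≤ a`; above it, `x_k = c (x_{k-1} + z_{k-1})` with `c = (k-1)/(2k-N) ≥ 1`
because `0 < 2k - N ≤ k - 1`. In both regimes the invariant propagates and `x_{k-1} ≤ x_k`.
-/

section AdmissiblePair

variable {K : Type*} [Field K] [LinearOrder K] [IsStrictOrderedRing K]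

def AdmissiblePair (x z : K) : Prop := 0 < x ∧ 0 ≤ z ∧ z ≤ x

lemma AdmissiblePair.low_step {x z a b : K} (h : AdmissiblePair x z)
    (ha : 1 ≤ a) (hb : 0 ≤ b) (hba : b ≤ a) :
    AdmissiblePair (a * x + z) (a * x + z - b * x) ∧ x ≤ a * x + z := by
  obtain ⟨hx, hz, -⟩ := h
  have hle : x ≤ a * x + z := by nlinarith
  refine ⟨⟨hx.trans_le hle, by nlinarith, sub_le_self _ (by positivity)⟩, hle⟩

lemma AdmissiblePair.high_step {x z c : K} (h : AdmissiblePair x z) (hc : 1 ≤ c) :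
    AdmissiblePair (c * (x + z)) 0 ∧ x ≤ c * (x + z) := by
  obtain ⟨hx, hz, -⟩ := h
  have hle : x ≤ c * (x + z) :=
    (le_add_of_nonneg_right hz).trans (le_mul_of_one_le_left (by positivity) hc)
  exact ⟨⟨hx.trans_le hle, le_rfl, hx.le.trans hle⟩, hle⟩

end AdmissiblePair

structure IsMultiplicityRecursion (N : ℕ) (x z : ℕ → ℚ) : Prop where
  x_low : ∀ k, 2 ≤ k → k ≤ N / 2 + 1 →
    x k = (((N : ℚ) - k + 1) / 2) * x (k - 1) + z (k - 1)
  z_low : ∀ k, 2 ≤ k → k ≤ N / 2 + 1 →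
    z k = x k - (((k : ℚ) - 1) / 2) * x (k - 1)
  x_high : ∀ k, N / 2 + 2 ≤ k → k ≤ N - 1 →
    x k = (((k : ℚ) - 1) / (2 * (k : ℚ) - N)) * (x (k - 1) + z (k - 1))
  z_high : ∀ k, N / 2 + 2 ≤ k → k ≤ N - 1 → z k = 0

namespace IsMultiplicityRecursion

variable {N k : ℕ} {x z : ℕ → ℚ}

lemma succ_of_le_half (h : IsMultiplicityRecursion N x z) (hk1 : 1 ≤ k) (hk : k + 1 ≤ N / 2 + 1)
    (hkN : k + 1 ≤ N - 1) (hadm : AdmissiblePair (x k) (z k)) :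
    AdmissiblePair (x (k + 1)) (z (k + 1)) ∧ x k ≤ x (k + 1) := by
  have hx := h.x_low (k + 1) (by omega) hk
  have hz := h.z_low (k + 1) (by omega) hk
  simp only [Nat.add_sub_cancel] at hx hz
  have h2k : 2 * (k : ℚ) ≤ N := by exact_mod_cast (by omega : 2 * k ≤ N)
  have hk2 : (k : ℚ) + 2 ≤ N := by exact_mod_cast (by omega : k + 2 ≤ N)
  rw [hz, hx]
  apply hadm.low_step <;> push_cast <;> linarith

lemma succ_of_half_lt (h : IsMultiplicityRecursion N x z) (hk : N / 2 + 1 < k + 1)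
    (hkN : k + 1 ≤ N - 1) (hadm : AdmissiblePair (x k) (z k)) :
    AdmissiblePair (x (k + 1)) (z (k + 1)) ∧ x k ≤ x (k + 1) := by
  have hx := h.x_high (k + 1) (by omega) hkN
  simp only [Nat.add_sub_cancel] at hx
  have hden : (N : ℚ) + 1 ≤ 2 * (k + 1) := by exact_mod_cast (by omega : N + 1 ≤ 2 * (k + 1))
  have hk2 : (k : ℚ) + 2 ≤ N := by exact_mod_cast (by omega : k + 2 ≤ N)
  rw [hx, h.z_high (k + 1) (by omega) hkN]
  apply hadm.high_step
  rw [one_le_div (by push_cast; linarith)]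
  push_cast; linarith

lemma succ (h : IsMultiplicityRecursion N x z) (hk1 : 1 ≤ k) (hkN : k + 1 ≤ N - 1)
    (hadm : AdmissiblePair (x k) (z k)) :
    AdmissiblePair (x (k + 1)) (z (k + 1)) ∧ x k ≤ x (k + 1) := by
  rcases le_or_gt (k + 1) (N / 2 + 1) with hk | hk
  · exact h.succ_of_le_half hk1 hk hkN hadm
  · exact h.succ_of_half_lt hk hkN hadm

lemma admissiblePair (h : IsMultiplicityRecursion N x z) (hx1 : x 1 = 1) (hz1 : z 1 = 1)
    (hk : 1 ≤ k) (hkN : k ≤ N - 1) : AdmissiblePair (x k) (z k) := by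
  induction k, hk using Nat.le_induction with
  | base => simp [AdmissiblePair, hx1, hz1]
  | succ k hk ih => exact (h.succ hk hkN (ih (by omega))).1

end IsMultiplicityRecursion

theorem xk_pos_mono_zk_bounds_general (N : ℕ) (x z : ℕ → ℚ)
    (hx1 : x 1 = 1) (hz1 : z 1 = 1)
    (hxlow : ∀ k, 2 ≤ k → k ≤ N / 2 + 1 →
      x k = (((N : ℚ) - k + 1) / 2) * x (k - 1) + z (k - 1))
    (hzlow : ∀ k, 2 ≤ k → k ≤ N / 2 + 1 →
      z k = x k - (((k : ℚ) - 1) / 2) * x (k - 1))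
    (hxhigh : ∀ k, N / 2 + 2 ≤ k → k ≤ N - 1 →
      x k = (((k : ℚ) - 1) / (2 * (k : ℚ) - N)) * (x (k - 1) + z (k - 1)))
    (hzhigh : ∀ k, N / 2 + 2 ≤ k → k ≤ N - 1 → z k = 0) :
    (∀ k, 1 ≤ k → k ≤ N - 1 → 0 < x k) ∧
    (∀ k, 2 ≤ k → k ≤ N - 1 → x (k - 1) ≤ x k) ∧
    (∀ k, 1 ≤ k → k ≤ N - 2 → 0 ≤ z k ∧ z k ≤ x k) := by
  have hrec : IsMultiplicityRecursion N x z := ⟨hxlow, hzlow, hxhigh, hzhigh⟩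
  have hadm := fun k hk hkN ↦ hrec.admissiblePair hx1 hz1 (k := k) hk hkN
  refine ⟨fun k hk hkN ↦ (hadm k hk hkN).1, fun k hk hkN ↦ ?_,
    fun k hk hkN ↦ (hadm k hk (by omega)).2⟩
  obtain ⟨j, rfl⟩ : ∃ j, k = j + 1 := ⟨k - 1, by omega⟩
  exact (hrec.succ (by omega) hkN (hadm j (by omega) (by omega))).2

/-- Positivity and monotonicity of the multiplicities `x_k`, and bounds `0 ≤ z_k ≤ x_k`,
for the recursive PIR scheme over `K_N`. -/
theorem xk_pos_mono_zk_bounds (N : ℕ) (hN : 3 ≤ N) (x z : ℕ → ℚ)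
    (hx1 : x 1 = 1) (hz1 : z 1 = 1)
    (hxlow : ∀ k, 2 ≤ k → k ≤ N / 2 + 1 →
      x k = (((N : ℚ) - k + 1) / 2) * x (k - 1) + z (k - 1))
    (hzlow : ∀ k, 2 ≤ k → k ≤ N / 2 + 1 →
      z k = x k - (((k : ℚ) - 1) / 2) * x (k - 1))
    (hxhigh : ∀ k, N / 2 + 2 ≤ k → k ≤ N - 1 →
      x k = (((k : ℚ) - 1) / (2 * (k : ℚ) - N)) * (x (k - 1) + z (k - 1)))
    (hzhigh : ∀ k, N / 2 + 2 ≤ k → k ≤ N - 1 → z k = 0) :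
    (∀ k, 1 ≤ k → k ≤ N - 1 → 0 < x k) ∧
    (∀ k, 2 ≤ k → k ≤ N - 1 → x (k - 1) ≤ x k) ∧
    (∀ k, 1 ≤ k → k ≤ N - 2 → 0 ≤ z k ∧ z k ≤ x k) :=
  xk_pos_mono_zk_bounds_general N x z hx1 hz1 hxlow hzlow hxhigh hzhigh
end

section
/- Fix an integer N ≥ 3 and define x_k, z_k as in the recursive scheme (x_1 = z_1 = 1; for k ≤ ⌊N/2⌋+1: x_k = ((N-k+1)/2)x_{k-1} + z_{k-1}, z_k = x_k - ((k-1)/2)x_{k-1}; for k ≥ ⌊N/2⌋+2: x_k = ((k-1)/(2k-N))(x_{k-1}+z_{k-1}), z_k = 0), and define y_2 = (N-3)/2 and y_k = x_k - 2x_{k-1} + ((k-2)/(N-k))·y_{k-1} for 3 ≤ k ≤ N-1. Then y_k = ((N-k-1)/2)·x_{k-1} for 2 ≤ k ≤ ⌊N/2⌋+1, and y_k = ((N-k-1)/(k-1))·x_k for ⌊N/2⌋+2 ≤ k ≤ N-1. -/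
private lemma aux_base' (a b p q X Y : ℚ) (h1 : b - (a+2) ≠ 0) (h2 : 2*(a+2) - b ≠ 0)
    (h3 : (a:ℚ) + 2 - 1 ≠ 0)
    (hX : X = ((a+2)-1)/(2*(a+2)-b) * (p + (p - ((a+1)-1)/2 * q)))
    (hY : Y = X - 2*p + ((a+2)-2)/(b-(a+2)) * ((b-(a+1)-1)/2 * q)) :
    Y = (b-(a+2)-1)/((a+2)-1) * X := by
  subst hX hY
  field_simp
  ring

private lemma aux_succ' (b c p X Y : ℚ) (h1 : b - (c+1) ≠ 0) (h2 : c - 1 ≠ 0)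
    (h3 : 2*(c+1) - b ≠ 0) (h4 : (c:ℚ) ≠ 0)
    (hX : X = ((c+1)-1)/(2*(c+1)-b) * (p + 0))
    (hY : Y = X - 2*p + ((c+1)-2)/(b-(c+1)) * ((b-c-1)/(c-1) * p)) :
    Y = (b-(c+1)-1)/((c+1)-1) * X := by
  subst hX hY
  have h1' : b - c - 1 ≠ 0 := by intro h; apply h1; linarith
  rw [show b - (c+1) - 1 = b - c - 2 by ring, show c + 1 - 1 = c by ring,
    show c + 1 - 2 = c - 1 by ring, show b - (c+1) = b - c - 1 by ring]
  field_simp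
  ring

/-- Closed relation between `y_k` and `x_k` in the recursive PIR scheme over `K_N`:
`y_k = ((N-k-1)/2)·x_{k-1}` for `2 ≤ k ≤ ⌊N/2⌋+1`, and
`y_k = ((N-k-1)/(k-1))·x_k` for `⌊N/2⌋+2 ≤ k ≤ N-1`. -/
theorem yk_closed_relation (N : ℕ) (hN : 3 ≤ N) (x y z : ℕ → ℚ)
    (hx1 : x 1 = 1) (hz1 : z 1 = 1)
    (hxlow : ∀ k, 2 ≤ k → k ≤ N / 2 + 1 →
      x k = (((N : ℚ) - k + 1) / 2) * x (k - 1) + z (k - 1))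
    (hzlow : ∀ k, 2 ≤ k → k ≤ N / 2 + 1 →
      z k = x k - (((k : ℚ) - 1) / 2) * x (k - 1))
    (hxhigh : ∀ k, N / 2 + 2 ≤ k → k ≤ N - 1 →
      x k = (((k : ℚ) - 1) / (2 * (k : ℚ) - N)) * (x (k - 1) + z (k - 1)))
    (hzhigh : ∀ k, N / 2 + 2 ≤ k → k ≤ N - 1 → z k = 0)
    (hy2 : y 2 = ((N : ℚ) - 3) / 2)
    (hy : ∀ k, 3 ≤ k → k ≤ N - 1 →
      y k = x k - 2 * x (k - 1) + (((k : ℚ) - 2) / ((N : ℚ) - k)) * y (k - 1)) :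
    (∀ k, 2 ≤ k → k ≤ N / 2 + 1 → y k = (((N : ℚ) - k - 1) / 2) * x (k - 1)) ∧
    (∀ k, N / 2 + 2 ≤ k → k ≤ N - 1 → y k = (((N : ℚ) - k - 1) / ((k : ℚ) - 1)) * x k) := by
  have low : ∀ k, 2 ≤ k → k ≤ N / 2 + 1 → y k = (((N : ℚ) - k - 1) / 2) * x (k - 1) := by
    intro k hk2
    induction k, hk2 using Nat.le_induction with
    | base =>
      intro _
      rw [hy2]
      norm_num [hx1]
      ring
    | succ k hk ih =>
      intro hle
      have hk2 : k ≤ N / 2 + 1 := by omega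
      have hkN : k + 1 ≤ N - 1 := by omega
      have e1 := hy (k + 1) (by omega) hkN
      have e2 := hxlow (k + 1) (by omega) hle
      have e3 := hzlow k hk hk2
      have e4 := ih hk2
      simp only [Nat.add_sub_cancel] at e1 e2 ⊢
      rw [e1, e2, e3, e4]
      have h1 : (N : ℚ) - ((k : ℚ) + 1) ≠ 0 := by
        have : (k : ℚ) + 1 < N := by exact_mod_cast (by omega : k + 1 < N)
        linarith
      have h2 : (N : ℚ) - (k : ℚ) - 1 ≠ 0 := by intro h; apply h1; linarith
      push_cast
      field_simp
      ring
  refine ⟨low, ?_⟩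
  intro k hk
  induction k, hk using Nat.le_induction with
  | base =>
    intro hle
    have hm3 : 3 ≤ N / 2 + 2 := by omega
    have e1 := hy (N / 2 + 2) hm3 hle
    have e2 := hxhigh (N / 2 + 2) le_rfl hle
    have e3 := hzlow (N / 2 + 2 - 1) (by omega) (by omega)
    have e4 := low (N / 2 + 2 - 1) (by omega) (by omega)
    have hc1 : ((N / 2 + 2 - 1 : ℕ) : ℚ) = ((N / 2 : ℕ) : ℚ) + 1 := by
      push_cast [Nat.cast_sub (show 1 ≤ N / 2 + 2 by omega)]; ring
    have hlt : ((N / 2 : ℕ) : ℚ) + 2 < N := by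
      have : ((N / 2 + 2 : ℕ) : ℚ) < N := by exact_mod_cast (by omega : N / 2 + 2 < N)
      push_cast at this; linarith
    have hgt : (N : ℚ) < 2 * (((N / 2 : ℕ) : ℚ) + 2) := by
      have : (N : ℚ) < ((2 * (N / 2) + 4 : ℕ) : ℚ) := by
        exact_mod_cast (by omega : N < 2 * (N / 2) + 4)
      push_cast at this; linarith
    have h1 : (N : ℚ) - (((N / 2 : ℕ) : ℚ) + 2) ≠ 0 := by intro h; linarith
    have h2 : 2 * (((N / 2 : ℕ) : ℚ) + 2) - N ≠ 0 := by intro h; linarith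
    have h3 : ((N / 2 : ℕ) : ℚ) + 2 - 1 ≠ 0 := by
      have : (0 : ℚ) ≤ ((N / 2 : ℕ) : ℚ) := Nat.cast_nonneg _
      intro h; linarith
    have hX : x (N / 2 + 2) = ((((N / 2 : ℕ) : ℚ) + 2) - 1) / (2 * (((N / 2 : ℕ) : ℚ) + 2) - N) *
        (x (N / 2 + 2 - 1) + (x (N / 2 + 2 - 1) -
          ((((N / 2 : ℕ) : ℚ) + 1) - 1) / 2 * x (N / 2 + 2 - 1 - 1))) := by
      rw [e2, e3]; push_cast [hc1]; ring
    have hY : y (N / 2 + 2) = x (N / 2 + 2) - 2 * x (N / 2 + 2 - 1) +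
        ((((N / 2 : ℕ) : ℚ) + 2) - 2) / ((N : ℚ) - (((N / 2 : ℕ) : ℚ) + 2)) *
          (((N : ℚ) - (((N / 2 : ℕ) : ℚ) + 1) - 1) / 2 * x (N / 2 + 2 - 1 - 1)) := by
      rw [e1, e4]; push_cast [hc1]; ring
    have key := aux_base' ((N / 2 : ℕ) : ℚ) (N : ℚ) (x (N / 2 + 2 - 1)) (x (N / 2 + 2 - 1 - 1))
      (x (N / 2 + 2)) (y (N / 2 + 2)) h1 h2 h3 hX hY
    rw [key]; push_cast; ring
  | succ k hk ih =>
    intro hle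
    have e1 := hy (k + 1) (by omega) hle
    have e2 := hxhigh (k + 1) (by omega) hle
    have e3 := hzhigh k hk (by omega)
    have e4 := ih (by omega)
    simp only [Nat.add_sub_cancel] at e1 e2
    have hk3 : 3 ≤ k := by omega
    have h1 : (N : ℚ) - ((k : ℚ) + 1) ≠ 0 := by
      have : (k : ℚ) + 1 < N := by exact_mod_cast (by omega : k + 1 < N)
      linarith
    have h2 : (k : ℚ) - 1 ≠ 0 := by
      have : (2 : ℚ) ≤ k := by exact_mod_cast (by omega : 2 ≤ k)
      intro h; linarith
    have h3 : 2 * ((k : ℚ) + 1) - N ≠ 0 := by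
      have : (N : ℚ) < 2 * ((k : ℚ) + 1) := by
        have : (N : ℚ) < ((2 * (k + 1) : ℕ) : ℚ) := by
          exact_mod_cast (by omega : N < 2 * (k + 1))
        push_cast at this; linarith
      linarith
    have h4 : (k : ℚ) ≠ 0 := by positivity
    have hX : x (k + 1) = (((k : ℚ) + 1) - 1) / (2 * ((k : ℚ) + 1) - N) * (x k + 0) := by
      rw [e2, e3]; push_cast; ring
    have hY : y (k + 1) = x (k + 1) - 2 * x k + (((k : ℚ) + 1) - 2) / ((N : ℚ) - ((k : ℚ) + 1)) *
        (((N : ℚ) - (k : ℚ) - 1) / ((k : ℚ) - 1) * x k) := by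
      rw [e1, e4]; push_cast; ring
    have key := aux_succ' (N : ℚ) (k : ℚ) (x k) (x (k + 1)) (y (k + 1)) h1 h2 h3 h4 hX hY
    rw [key]; push_cast; ring
end

section
/- With x_k, y_k, z_k defined by the recursive scheme over K_N (as above), for all 2 ≤ k ≤ N-1 we have 0 ≤ y_k ≤ x_k and x_k ≥ (k/(2(N-k-1))) · y_k. -/
set_option maxHeartbeats 1600000 in
/-- For the recursive PIR scheme over `K_N`: `0 ≤ y_k ≤ x_k` for `2 ≤ k ≤ N-1`,
`x_k ≥ (k/(2(N-k-1)))·y_k` for `2 ≤ k ≤ N-2`, and `y_{N-1} = 0`. -/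
theorem yk_bounds (N : ℕ) (hN : 3 ≤ N) (x y z : ℕ → ℚ)
    (hx1 : x 1 = 1) (hz1 : z 1 = 1)
    (hxlow : ∀ k, 2 ≤ k → k ≤ N / 2 + 1 →
      x k = (((N : ℚ) - k + 1) / 2) * x (k - 1) + z (k - 1))
    (hzlow : ∀ k, 2 ≤ k → k ≤ N / 2 + 1 →
      z k = x k - (((k : ℚ) - 1) / 2) * x (k - 1))
    (hxhigh : ∀ k, N / 2 + 2 ≤ k → k ≤ N - 1 →
      x k = (((k : ℚ) - 1) / (2 * (k : ℚ) - N)) * (x (k - 1) + z (k - 1)))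
    (hzhigh : ∀ k, N / 2 + 2 ≤ k → k ≤ N - 1 → z k = 0)
    (hy2 : y 2 = ((N : ℚ) - 3) / 2)
    (hy : ∀ k, 3 ≤ k → k ≤ N - 1 →
      y k = x k - 2 * x (k - 1) + (((k : ℚ) - 2) / ((N : ℚ) - k)) * y (k - 1)) :
    (∀ k, 2 ≤ k → k ≤ N - 1 → 0 ≤ y k ∧ y k ≤ x k) ∧
    (∀ k, 2 ≤ k → k ≤ N - 2 → ((k : ℚ) / (2 * ((N : ℚ) - k - 1))) * y k ≤ x k) ∧
    y (N - 1) = 0 := by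
  have hNq : (3:ℚ) ≤ (N:ℚ) := by exact_mod_cast hN
  -- The key invariant: y k = ((N-k-1)/(k-1)) (x k - z k), plus positivity facts.
  have key : ∀ k, 2 ≤ k → k ≤ N - 1 →
      (0 < x k ∧ 0 ≤ z k ∧ z k ≤ x k ∧ y k ≤ x k) ∧
      y k = (((N:ℚ) - k - 1) / ((k:ℚ) - 1)) * (x k - z k) := by
    intro k hk2
    induction k, hk2 using Nat.le_induction with
    | base =>
      intro _
      have hx2 := hxlow 2 le_rfl (by omega)
      have hz2 := hzlow 2 le_rfl (by omega)
      norm_num [hx1, hz1] at hx2 hz2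
      rw [hx2] at hz2
      constructor
      · refine ⟨by rw [hx2]; linarith, by rw [hz2]; linarith,
          by rw [hx2, hz2]; linarith, by rw [hy2, hx2]; linarith⟩
      · rw [hy2, hx2, hz2]; push_cast; ring
    | succ k hk ih =>
      intro hle
      have hkN : k ≤ N - 1 := by omega
      obtain ⟨⟨hx_pos, hz_nonneg, hzx, _⟩, hid⟩ := ih hkN
      have hkq : (2:ℚ) ≤ (k:ℚ) := by exact_mod_cast hk
      have hk2N : (k:ℚ) + 2 ≤ (N:ℚ) := by exact_mod_cast (show k + 2 ≤ N by omega)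
      have hy_eq := hy (k+1) (by omega) hle
      simp only [Nat.add_sub_cancel] at hy_eq
      push_cast at hy_eq
      have hd1 : (N:ℚ) - (k + 1) ≠ 0 := by intro h; nlinarith
      have hd2 : (k:ℚ) - 1 ≠ 0 := by intro h; nlinarith
      have hd3 : (N:ℚ) - k - 1 ≠ 0 := by intro h; nlinarith
      have hyk1 : y (k+1) = x (k+1) - x k - z k := by
        rw [hy_eq, hid]; field_simp; ring
      rcases le_or_gt (k+1) (N/2+1) with hcase | hcase
      · -- low regime
        have hx := hxlow (k+1) (by omega) hcase
        have hz := hzlow (k+1) (by omega) hcase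
        simp only [Nat.add_sub_cancel] at hx hz
        push_cast at hx hz
        have h2kq : 2*(k:ℚ) ≤ (N:ℚ) := by exact_mod_cast (show 2*k ≤ N by omega)
        have hxpos1 : 0 < x (k+1) := by
          rw [hx]
          have h1 : (0:ℚ) < ((N:ℚ) - (k+1) + 1)/2 := by linarith
          nlinarith [mul_pos h1 hx_pos]
        have hznn1 : 0 ≤ z (k+1) := by
          rw [hz, hx]
          nlinarith [mul_nonneg (show (0:ℚ) ≤ ((N:ℚ)-2*(k:ℚ)) by linarith) hx_pos.le]
        have hzx1 : z (k+1) ≤ x (k+1) := by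
          rw [hz]
          nlinarith [mul_nonneg (show (0:ℚ) ≤ (((k:ℚ)+1)-1)/2 by linarith) hx_pos.le]
        refine ⟨⟨hxpos1, hznn1, hzx1, by rw [hyk1]; linarith⟩, ?_⟩
        rw [hyk1, hz, hx]
        push_cast
        have hk1 : (k:ℚ) + 1 - 1 ≠ 0 := by intro h; nlinarith
        field_simp
        ring
      · -- high regime
        have hcase' : N/2 + 2 ≤ k + 1 := by omega
        have hx := hxhigh (k+1) hcase' hle
        have hz := hzhigh (k+1) hcase' hle
        simp only [Nat.add_sub_cancel] at hx
        push_cast at hx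
        have hdq : (0:ℚ) < 2*((k:ℚ)+1) - N := by
          have : (N:ℚ) + 3 ≤ 2*((k:ℚ)+1) := by exact_mod_cast (show N + 3 ≤ 2*(k+1) by omega)
          linarith
        have hxpos1 : 0 < x (k+1) := by
          rw [hx]
          apply mul_pos (div_pos (by linarith) hdq) (by linarith)
        refine ⟨⟨hxpos1, by rw [hz], by rw [hz]; exact hxpos1.le,
          by rw [hyk1]; linarith⟩, ?_⟩
        rw [hyk1, hz, hx]
        push_cast
        have hk1 : (k:ℚ) + 1 - 1 ≠ 0 := by intro h; nlinarith
        have hb : 2 * ((k:ℚ) + 1) - (N:ℚ) ≠ 0 := by intro h; nlinarith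
        have hb' : ((k:ℚ) + 1) * 2 - (N:ℚ) ≠ 0 := by intro h; nlinarith
        field_simp
        ring
  -- assemble the three claims
  refine ⟨?_, ?_, ?_⟩
  · intro k hk2 hkN
    obtain ⟨⟨hx_pos, hz_nonneg, hzx, hyx⟩, hid⟩ := key k hk2 hkN
    have hkq : (2:ℚ) ≤ (k:ℚ) := by exact_mod_cast hk2
    have hkNq : (k:ℚ) + 1 ≤ (N:ℚ) := by exact_mod_cast (show k + 1 ≤ N by omega)
    refine ⟨?_, hyx⟩
    rw [hid]
    apply mul_nonneg (div_nonneg (by linarith) (by linarith)) (by linarith)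
  · intro k hk2 hkN
    obtain ⟨⟨hx_pos, hz_nonneg, hzx, hyx⟩, hid⟩ := key k hk2 (by omega)
    have hkq : (2:ℚ) ≤ (k:ℚ) := by exact_mod_cast hk2
    have hkNq : (k:ℚ) + 2 ≤ (N:ℚ) := by exact_mod_cast (show k + 2 ≤ N by omega)
    have hy_nonneg : 0 ≤ y k := by
      rw [hid]
      apply mul_nonneg (div_nonneg (by linarith) (by linarith)) (by linarith)
    have hk1ne : (k:ℚ) - 1 ≠ 0 := by intro h; nlinarith
    have hyv : ((k:ℚ) - 1) * y k = ((N:ℚ) - k - 1) * (x k - z k) := by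
      rw [hid]
      field_simp
    rw [div_mul_eq_mul_div, div_le_iff₀ (by nlinarith)]
    nlinarith [mul_nonneg (show (0:ℚ) ≤ (N:ℚ) - k - 2 by linarith) hx_pos.le,
      mul_nonneg (show (0:ℚ) ≤ (N:ℚ) - k - 1 by linarith) hz_nonneg]
  · have h := (key (N-1) (by omega) le_rfl).2
    rw [h, Nat.cast_sub (by omega : 1 ≤ N), Nat.cast_one]
    rw [show (N:ℚ) - ((N:ℚ) - 1) - 1 = 0 from by ring, zero_div, zero_mul]
end

section
/- With x_k defined by the recursive scheme over K_N, y_{N-1} = 0; that is, x_{N-1} - 2x_{N-2} + ((N-3)/1)·y_{N-2} = 0 where y_k follows the stated recursion. -/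
/-- For the recursive scheme over `K_N` (`N ≥ 4`):
`x_{N-1} - 2·x_{N-2} + (N-3)·y_{N-2} = 0`, i.e. `y_{N-1} = 0`. -/
theorem y_last_eq_zero (N : ℕ) (hN : 4 ≤ N) (x y z : ℕ → ℚ)
    (hx1 : x 1 = 1) (hz1 : z 1 = 1)
    (hxlow : ∀ k, 2 ≤ k → k ≤ N / 2 + 1 →
      x k = (((N : ℚ) - k + 1) / 2) * x (k - 1) + z (k - 1))
    (hzlow : ∀ k, 2 ≤ k → k ≤ N / 2 + 1 →
      z k = x k - (((k : ℚ) - 1) / 2) * x (k - 1))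
    (hxhigh : ∀ k, N / 2 + 2 ≤ k → k ≤ N - 1 →
      x k = (((k : ℚ) - 1) / (2 * (k : ℚ) - N)) * (x (k - 1) + z (k - 1)))
    (hzhigh : ∀ k, N / 2 + 2 ≤ k → k ≤ N - 1 → z k = 0)
    (hy2 : y 2 = ((N : ℚ) - 3) / 2)
    (hy : ∀ k, 3 ≤ k → k ≤ N - 1 →
      y k = x k - 2 * x (k - 1) + (((k : ℚ) - 2) / ((N : ℚ) - k)) * y (k - 1)) :
    x (N - 1) - 2 * x (N - 2) + (((N : ℚ) - 3) / 1) * y (N - 2) = 0 := by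
  have key : ∀ k, 2 ≤ k → k ≤ N - 2 →
      ((k : ℚ) - 1) * y k = ((N : ℚ) - k - 1) * (x k - z k) := by
    intro k hk2
    induction k, hk2 using Nat.le_induction with
    | base =>
      intro _
      have hz := hzlow 2 (by omega) (by omega)
      norm_num at hz
      rw [hy2, hz, hx1]
      push_cast
      ring
    | succ k hk ih =>
      intro hkN
      have IH := ih (by omega)
      have hk1 : (k : ℚ) - 1 ≠ 0 := by
        have : (2 : ℚ) ≤ (k : ℚ) := by exact_mod_cast hk
        intro h; linarith
      have hNm : (N : ℚ) - ((k : ℚ) + 1) ≠ 0 := by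
        have : ((k : ℚ) + 3) ≤ (N : ℚ) := by exact_mod_cast (by omega : k + 3 ≤ N)
        intro h; linarith
      have hy' := hy (k + 1) (by omega) (by omega)
      simp only [Nat.add_sub_cancel] at hy'
      push_cast at hy' ⊢
      have hyk : y k = ((N : ℚ) - k - 1) * (x k - z k) / ((k : ℚ) - 1) := by
        field_simp
        linarith [IH]
      rcases le_or_gt (k + 1) (N / 2 + 1) with hc | hc
      · have hx' := hxlow (k + 1) (by omega) hc
        have hz' := hzlow (k + 1) (by omega) hc
        simp only [Nat.add_sub_cancel] at hx' hz'
        push_cast at hx' hz'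
        rw [hx'] at hz'
        rw [hy', hx', hz', hyk]
        field_simp
        ring
      · have hc' : N / 2 + 2 ≤ k + 1 := by omega
        have hden : 2 * ((k : ℚ) + 1) - N ≠ 0 := by
          have : (N : ℚ) ≤ 2 * (k : ℚ) + 1 := by exact_mod_cast (by omega : N ≤ 2 * k + 1)
          intro h; linarith
        have hx' := hxhigh (k + 1) hc' (by omega)
        have hz' := hzhigh (k + 1) hc' (by omega)
        simp only [Nat.add_sub_cancel] at hx'
        push_cast at hx'
        rw [hy', hx', hz', hyk]
        have hden' : ((k : ℚ) + 1) * 2 - N ≠ 0 := by intro h; apply hden; linarith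
        field_simp
        ring
  have hkey := key (N - 2) (by omega) le_rfl
  have e2 : ((N - 2 : ℕ) : ℚ) = (N : ℚ) - 2 := by
    rw [Nat.cast_sub (by omega)]; norm_num
  rw [e2] at hkey
  rcases lt_or_ge N 5 with h5 | h5
  · interval_cases N
    have hx3 := hxlow 3 (by norm_num) (by norm_num)
    norm_num at hx3 hkey ⊢
    rw [hx3]
    linarith [hkey]
  · have hx' : x (N - 1) = x (N - 2) + z (N - 2) := by
      have h := hxhigh (N - 1) (by omega) le_rfl
      have e1 : ((N - 1 : ℕ) : ℚ) = (N : ℚ) - 1 := by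
        rw [Nat.cast_sub (by omega)]; norm_num
      have e3 : N - 1 - 1 = N - 2 := by omega
      rw [e1, e3] at h
      have hc2 : (N : ℚ) - 2 ≠ 0 := by
        have : (4 : ℚ) ≤ (N : ℚ) := by exact_mod_cast hN
        intro hh; linarith
      rw [h]
      have : ((N : ℚ) - 1 - 1) / (2 * ((N : ℚ) - 1) - N) = 1 := by
        rw [div_eq_one_iff_eq (by intro hh; apply hc2; linarith)]
        ring
      rw [this, one_mul]
    rw [hx']
    linarith [hkey]
end

section
/- For the recursive sequence x_k of the K_N scheme and k ≥ ⌊N/2⌋+2, one has the closed form x_k = (∏_{i=k_0}^{k} (i-1)/(2i-N)) · ∑_{j=0}^{k_0-2} ((N+3)!/(2^j (N-j+3)!)) · (-1)^{k_0-j-2} · ((k_0-j+2)/2) · binom(k_0-2, j), where k_0 = ⌊N/2⌋+2. -/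
open Finset

noncomputable def gq (N j : ℕ) : ℚ :=
  ((Nat.factorial (N + 3) : ℚ) / (2 ^ j * (Nat.factorial (N + 3 - j) : ℚ))) * (-1) ^ j

lemma gq_zero (N : ℕ) : gq N 0 = 1 := by
  have : (Nat.factorial (N+3) : ℚ) ≠ 0 := by exact_mod_cast Nat.factorial_ne_zero _
  simp [gq, div_self this]

lemma gq_succ (N j : ℕ) (h : j ≤ N + 2) :
    gq N (j + 1) = -(gq N j * (((N : ℚ) + 3 - j) / 2)) := by
  have h1 : N + 3 - j = (N + 2 - j) + 1 := by omega
  have h2 : ((N + 3 - j : ℕ) : ℚ) = (N : ℚ) + 3 - j := by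
    push_cast [Nat.cast_sub (by omega : j ≤ N + 3)]; ring
  have h3 : N + 3 - (j + 1) = N + 2 - j := by omega
  have hf : (Nat.factorial (N + 3 - j) : ℚ)
      = (N + 3 - j : ℕ) * (Nat.factorial (N + 2 - j)) := by
    rw [h1, Nat.factorial_succ]; push_cast; ring
  have hne : (Nat.factorial (N + 2 - j) : ℚ) ≠ 0 := by
    exact_mod_cast Nat.factorial_ne_zero _
  have hne2 : ((N + 3 - j : ℕ) : ℚ) ≠ 0 := by
    rw [h2]
    have : (j : ℚ) ≤ (N : ℚ) + 2 := by exact_mod_cast h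
    nlinarith
  simp only [gq, h3, hf, pow_succ]
  rw [h2] at *
  field_simp

lemma sum_pascal (c : ℕ → ℚ) (m : ℕ) :
    ∑ j ∈ range (m + 2), c j * (Nat.choose (m + 1) j : ℚ)
      = ∑ j ∈ range (m + 1), c (j + 1) * (Nat.choose m j : ℚ)
        + ∑ j ∈ range (m + 1), c j * (Nat.choose m j : ℚ) := by
  rw [Finset.sum_range_succ']
  have h1 : ∀ j ∈ range (m + 1),
      c (j+1) * (Nat.choose (m+1) (j+1) : ℚ)
        = c (j+1) * (Nat.choose m j : ℚ) + c (j+1) * (Nat.choose m (j+1) : ℚ) := by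
    intro j _
    rw [Nat.choose_succ_succ]
    push_cast; ring
  rw [Finset.sum_congr rfl h1, Finset.sum_add_distrib]
  have h2 : ∑ j ∈ range (m + 1), c (j+1) * (Nat.choose m (j+1) : ℚ)
      = ∑ j ∈ range (m + 1), c j * (Nat.choose m j : ℚ) - c 0 * (Nat.choose m 0 : ℚ) := by
    have := Finset.sum_range_succ' (fun j => c j * (Nat.choose m j : ℚ)) (m + 1)
    have h3 : ∑ j ∈ range (m + 2), c j * (Nat.choose m j : ℚ)
        = ∑ j ∈ range (m + 1), c j * (Nat.choose m j : ℚ) := by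
      rw [Finset.sum_range_succ, Nat.choose_eq_zero_of_lt (by omega)]
      push_cast; ring
    rw [h3] at this
    linarith [this]
  rw [h2]
  simp
  ring

lemma sumX (N m : ℕ) (h : m ≤ N + 1) :
    ∑ j ∈ range (m + 1), gq N j * (((N:ℚ) + 1 - j) / 2) * (Nat.choose m j : ℚ)
      = -∑ j ∈ range (m + 2), gq N j * (Nat.choose (m + 1) j : ℚ) := by
  rw [sum_pascal (gq N) m]
  have h1 : ∀ j ∈ range (m + 1),
      gq N j * (((N:ℚ) + 1 - j) / 2) * (Nat.choose m j : ℚ)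
        = -(gq N (j+1) * (Nat.choose m j : ℚ)) - gq N j * (Nat.choose m j : ℚ) := by
    intro j hj
    rw [gq_succ N j (by simp at hj; omega)]
    ring
  rw [Finset.sum_congr rfl h1, Finset.sum_sub_distrib]
  rw [Finset.sum_neg_distrib]; ring

lemma choose_id (m j : ℕ) :
    (m + 1).choose j * (m + 1 - j) = (m + 1) * m.choose j := by
  rw [← Nat.choose_succ_right_eq]; exact (Nat.add_one_mul_choose_eq m j).symm

lemma sumZ (g : ℕ → ℚ) (m : ℕ) :
    ∑ j ∈ range (m + 2), g j * (Nat.choose (m + 1) j : ℚ) * (((m : ℚ) + 1 - j) / 2)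
      = ((m : ℚ) + 1) / 2 * ∑ j ∈ range (m + 1), g j * (Nat.choose m j : ℚ) := by
  rw [Finset.mul_sum]
  have hext : ∑ j ∈ range (m + 2), ((m : ℚ) + 1) / 2 * (g j * (Nat.choose m j : ℚ))
      = ∑ j ∈ range (m + 1), ((m : ℚ) + 1) / 2 * (g j * (Nat.choose m j : ℚ)) := by
    rw [Finset.sum_range_succ, Nat.choose_eq_zero_of_lt (by omega)]
    push_cast; ring
  rw [← hext]
  apply Finset.sum_congr rfl
  intro j hj
  simp only [Finset.mem_range] at hj
  have hj' : j ≤ m + 1 := by omega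
  have h1 : ((m : ℚ) + 1 - j) = ((m + 1 - j : ℕ) : ℚ) := by
    push_cast [Nat.cast_sub hj']; ring
  have h2 : ((m + 1).choose j : ℚ) * ((m + 1 - j : ℕ) : ℚ)
      = ((m + 1 : ℕ) : ℚ) * (m.choose j : ℚ) := by
    exact_mod_cast congrArg (Nat.cast : ℕ → ℚ) (choose_id m j)
  rw [h1]
  push_cast at h2
  linear_combination (g j / 2) * h2

lemma low_closed (N : ℕ) (_hN : 3 ≤ N) (x z : ℕ → ℚ)
    (hx1 : x 1 = 1) (hz1 : z 1 = 1)
    (hxlow : ∀ k, 2 ≤ k → k ≤ N / 2 + 1 →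
      x k = (((N : ℚ) - k + 1) / 2) * x (k - 1) + z (k - 1))
    (hzlow : ∀ k, 2 ≤ k → k ≤ N / 2 + 1 →
      z k = x k - (((k : ℚ) - 1) / 2) * x (k - 1)) :
    ∀ k, 1 ≤ k → k ≤ N / 2 + 1 →
      x k = (-1 : ℚ) ^ (k - 1) * ∑ j ∈ range k, gq N j * (Nat.choose (k - 1) j : ℚ) ∧
      z k = (-1 : ℚ) ^ (k - 1) * ∑ j ∈ range k,
        gq N j * (Nat.choose (k - 1) j : ℚ) * (((k : ℚ) + 1 - j) / 2) := by
  intro k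
  induction k with
  | zero => omega
  | succ n ih =>
    intro _ hk2
    rcases Nat.eq_zero_or_pos n with hn | hn
    · subst hn
      constructor
      · simp [hx1, gq_zero]
      · simp [hz1, gq_zero]
    obtain ⟨m, rfl⟩ : ∃ m, n = m + 1 := ⟨n - 1, by omega⟩
    obtain ⟨hX, hZ⟩ := ih (by omega) (by omega)
    simp only [Nat.add_sub_cancel] at hX hZ ⊢
    have e1 : m + 1 + 1 = m + 2 := rfl
    rw [e1] at hk2 ⊢
    have hrec := hxlow (m + 2) (by omega) hk2
    have hzrec := hzlow (m + 2) (by omega) hk2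
    have e2 : m + 2 - 1 = m + 1 := rfl
    rw [e2] at hrec hzrec
    rw [hX, hZ] at hrec
    have hsum : ((N : ℚ) - (↑m + 2) + 1) / 2 * (∑ j ∈ range (m + 1), gq N j * (Nat.choose m j : ℚ))
        + ∑ j ∈ range (m + 1), gq N j * (Nat.choose m j : ℚ) * (((↑m : ℚ) + 1 + 1 - j) / 2)
        = -∑ j ∈ range (m + 2), gq N j * (Nat.choose (m + 1) j : ℚ) := by
      rw [← sumX N m (by omega), Finset.mul_sum, ← Finset.sum_add_distrib]
      apply Finset.sum_congr rfl
      intro j _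
      ring
    have hxg : x (m + 2) = (-1 : ℚ) ^ (m + 1)
        * ∑ j ∈ range (m + 2), gq N j * (Nat.choose (m + 1) j : ℚ) := by
      rw [hrec, pow_succ]
      push_cast
      linear_combination ((-1 : ℚ) ^ m) * hsum
    refine ⟨hxg, ?_⟩
    rw [hzrec, hxg, hX]
    have hsum2 := sumZ (gq N) m
    have hU : ∑ j ∈ range (m + 2),
          gq N j * (Nat.choose (m + 1) j : ℚ) * (((↑(m + 2) : ℚ) + 1 - j) / 2)
        = ∑ j ∈ range (m + 2), gq N j * (Nat.choose (m + 1) j : ℚ)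
          + ∑ j ∈ range (m + 2), gq N j * (Nat.choose (m + 1) j : ℚ) * (((m : ℚ) + 1 - j) / 2) := by
      rw [← Finset.sum_add_distrib]
      apply Finset.sum_congr rfl
      intro j _
      push_cast
      ring
    rw [hU, pow_succ]
    push_cast
    linear_combination ((-1 : ℚ) ^ m) * hsum2

/-- Closed form for `x_k` in the range `k ≥ ⌊N/2⌋+2` of the recursive PIR scheme over `K_N`,
with `k₀ = ⌊N/2⌋+2`. -/
theorem xk_closed_form_high (N : ℕ) (hN : 3 ≤ N) (x z : ℕ → ℚ)
    (hx1 : x 1 = 1) (hz1 : z 1 = 1)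
    (hxlow : ∀ k, 2 ≤ k → k ≤ N / 2 + 1 →
      x k = (((N : ℚ) - k + 1) / 2) * x (k - 1) + z (k - 1))
    (hzlow : ∀ k, 2 ≤ k → k ≤ N / 2 + 1 →
      z k = x k - (((k : ℚ) - 1) / 2) * x (k - 1))
    (hxhigh : ∀ k, N / 2 + 2 ≤ k → k ≤ N - 1 →
      x k = (((k : ℚ) - 1) / (2 * (k : ℚ) - N)) * (x (k - 1) + z (k - 1)))
    (hzhigh : ∀ k, N / 2 + 2 ≤ k → k ≤ N - 1 → z k = 0) :
    ∀ k, N / 2 + 2 ≤ k → k ≤ N - 1 →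
      x k = (∏ i ∈ Finset.Icc (N / 2 + 2) k, ((i : ℚ) - 1) / (2 * (i : ℚ) - N))
        * ∑ j ∈ Finset.range (N / 2 + 1),
            ((Nat.factorial (N + 3) : ℚ) / (2 ^ j * (Nat.factorial (N + 3 - j) : ℚ)))
              * (-1) ^ (N / 2 + 2 - j - 2)
              * ((((N / 2 + 2 : ℕ) : ℚ) - j + 2) / 2)
              * (Nat.choose (N / 2 + 2 - 2) j : ℚ) := by
  set K := N / 2 with hK
  obtain ⟨hX, hZ⟩ := low_closed N hN x z hx1 hz1 hxlow hzlow (K + 1) (by omega) (by omega)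
  simp only [Nat.add_sub_cancel] at hX hZ
  have hS : (∑ j ∈ Finset.range (K + 1),
        ((Nat.factorial (N + 3) : ℚ) / (2 ^ j * (Nat.factorial (N + 3 - j) : ℚ)))
          * (-1) ^ (K + 2 - j - 2)
          * ((((K + 2 : ℕ) : ℚ) - j + 2) / 2)
          * (Nat.choose (K + 2 - 2) j : ℚ))
      = x (K + 1) + z (K + 1) := by
    rw [hX, hZ, Finset.mul_sum, Finset.mul_sum, ← Finset.sum_add_distrib]
    apply Finset.sum_congr rfl
    intro j hj
    simp only [Finset.mem_range] at hj
    have e1 : K + 2 - j - 2 = K - j := by omega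
    have e2 : K + 2 - 2 = K := rfl
    rw [e1, e2]
    have hsign : ((-1 : ℚ)) ^ (K - j) = (-1) ^ K * (-1) ^ j := by
      have hjj : ((-1 : ℚ)) ^ j * (-1) ^ j = 1 := by
        rw [← pow_add, ← two_mul, pow_mul]; norm_num
      have hadd : K - j + j = K := by omega
      calc ((-1 : ℚ)) ^ (K - j) = (-1) ^ (K - j) * ((-1) ^ j * (-1) ^ j) := by rw [hjj]; ring
        _ = ((-1) ^ (K - j) * (-1) ^ j) * (-1) ^ j := by ring
        _ = (-1) ^ K * (-1) ^ j := by rw [← pow_add, hadd]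
    simp only [gq]
    rw [hsign]
    push_cast
    ring
  have main : ∀ k, K + 2 ≤ k → k ≤ N - 1 →
      x k = (∏ i ∈ Finset.Icc (K + 2) k, ((i : ℚ) - 1) / (2 * (i : ℚ) - N))
        * (x (K + 1) + z (K + 1)) := by
    intro k hk
    induction k, hk using Nat.le_induction with
    | base =>
      intro hN1
      have hx := hxhigh (K + 2) le_rfl hN1
      have e : K + 2 - 1 = K + 1 := rfl
      rw [e] at hx
      rw [hx, Finset.Icc_self, Finset.prod_singleton]
    | succ k hk ih =>
      intro hk2
      have hz0 := hzhigh k (by omega) (by omega)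
      have hx := hxhigh (k + 1) (by omega) hk2
      have e : k + 1 - 1 = k := rfl
      rw [e, hz0, ih (by omega)] at hx
      rw [hx, Finset.prod_Icc_succ_top (by omega : K + 2 ≤ k + 1)]
      ring
  intro k hk1 hk2
  rw [main k hk1 hk2, ← hS]
end

section
/- For every integer n ≥ 0, the function t ↦ ∑_{i=0}^{n} (n!/(2^{n-i+1} i!)) · ((1+t)/t)^i · e^{-2/t} is an antiderivative of t ↦ (1/t²) · ((1+t)/t)^n · e^{-2/t} on (0, ∞). -/
set_option maxRecDepth 10000


/-- telescope function -/
noncomputable def Jg (n : ℕ) (t : ℝ) : ℕ → ℝ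
  | 0 => 0
  | Nat.succ j => (1 / t ^ 2) * ((Nat.factorial n : ℝ) / (2 ^ (n - j) * (Nat.factorial j : ℝ)))
      * ((1 + t) / t) ^ j * Real.exp (-2 / t)

/-- For every `n ≥ 0`, `t ↦ ∑_{i=0}^{n} (n!/(2^{n-i+1}·i!))·((1+t)/t)^i·e^{-2/t}` is an
antiderivative of `t ↦ (1/t²)·((1+t)/t)^n·e^{-2/t}` on `(0, ∞)`. -/
theorem antiderivative_Jn (n : ℕ) (t : ℝ) (ht : 0 < t) :
    HasDerivAt (fun s : ℝ => ∑ i ∈ Finset.range (n + 1),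
        ((Nat.factorial n : ℝ) / (2 ^ (n - i + 1) * (Nat.factorial i : ℝ)))
          * ((1 + s) / s) ^ i * Real.exp (-2 / s))
      ((1 / t ^ 2) * ((1 + t) / t) ^ n * Real.exp (-2 / t)) t := by
  have ht' : t ≠ 0 := ne_of_gt ht
  set E : ℝ := Real.exp (-2 / t) with hE
  set u : ℝ := (1 + t) / t with hu0
  have g0 : Jg n t 0 = 0 := rfl
  have gs : ∀ j : ℕ, Jg n t (j + 1) = (1 / t ^ 2) * ((Nat.factorial n : ℝ) / (2 ^ (n - j) * (Nat.factorial j : ℝ))) * u ^ j * E := fun j => rfl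
  have hu : HasDerivAt (fun s : ℝ => (1 + s) / s) (-(1 / t ^ 2)) t := by
    have h1 : HasDerivAt (fun s : ℝ => 1 + s) 1 t := (hasDerivAt_id t).const_add 1
    have h2 : HasDerivAt (fun s : ℝ => s) 1 t := hasDerivAt_id t
    have := h1.fun_div h2 ht'
    refine this.congr_deriv ?_
    field_simp
    ring
  have hexp : HasDerivAt (fun s : ℝ => Real.exp (-2 / s)) (E * (2 / t ^ 2)) t := by
    have hi : HasDerivAt (fun s : ℝ => -2 / s) (2 / t ^ 2) t := by
      have h := (hasDerivAt_inv ht').const_mul (-2 : ℝ)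
      have heq : (fun s : ℝ => -2 * s⁻¹) = (fun s : ℝ => -2 / s) := by
        funext s; rw [div_eq_mul_inv]
      rw [heq] at h
      refine h.congr_deriv ?_
      field_simp
    exact hi.exp
  have key : ∀ i ∈ Finset.range (n + 1),
      HasDerivAt (fun s : ℝ => ((Nat.factorial n : ℝ) / (2 ^ (n - i + 1) * (Nat.factorial i : ℝ)))
          * ((1 + s) / s) ^ i * Real.exp (-2 / s)) (Jg n t (i + 1) - Jg n t i) t := by
    intro i hi
    have hin : i ≤ n := Nat.lt_succ_iff.mp (Finset.mem_range.mp hi)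
    have hd : HasDerivAt (fun s : ℝ => ((Nat.factorial n : ℝ) / (2 ^ (n - i + 1) * (Nat.factorial i : ℝ)))
        * ((1 + s) / s) ^ i * Real.exp (-2 / s))
        ((((Nat.factorial n : ℝ) / (2 ^ (n - i + 1) * (Nat.factorial i : ℝ))) * ((i : ℝ) * u ^ (i - 1) * (-(1 / t ^ 2)))) * E
          + (((Nat.factorial n : ℝ) / (2 ^ (n - i + 1) * (Nat.factorial i : ℝ))) * u ^ i) * (E * (2 / t ^ 2))) t :=
      ((hu.pow i).const_mul _).mul hexp
    convert hd using 1
    cases i with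
    | zero =>
      rw [g0, gs]
      have hp : (2:ℝ) ^ (n - 0 + 1) = 2 ^ (n - 0) * 2 := pow_succ 2 _
      rw [hp]
      simp only [Nat.factorial_zero, Nat.cast_one, Nat.cast_zero, pow_zero]
      field_simp
      ring
    | succ j =>
      have hjn : j < n := hin
      have h1 : n - (j + 1) + 1 = n - j := by omega
      have h2 : n - j = (n - (j + 1)) + 1 := by omega
      simp only [gs, Nat.succ_sub_one]
      rw [h1, h2]
      have hp : (2:ℝ) ^ (n - (j + 1) + 1) = 2 ^ (n - (j + 1)) * 2 := pow_succ 2 _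
      have hfac : (Nat.factorial (j + 1) : ℝ) = (j + 1) * Nat.factorial j := by
        push_cast [Nat.factorial_succ]; ring
      have f0 : (Nat.factorial j : ℝ) ≠ 0 := Nat.cast_ne_zero.mpr (Nat.factorial_ne_zero j)
      have p0 : (2 : ℝ) ^ (n - (j + 1)) ≠ 0 := by positivity
      rw [hp, hfac]
      push_cast
      field_simp
      ring
  have hsum := HasDerivAt.fun_sum key
  have htel : ∑ i ∈ Finset.range (n + 1), (Jg n t (i + 1) - Jg n t i) = Jg n t (n + 1) - Jg n t 0 :=
    Finset.sum_range_sub (Jg n t) (n + 1)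
  rw [htel] at hsum
  refine hsum.congr_deriv ?_
  simp only [g0, gs, Nat.sub_self, pow_zero]
  have f0 : (Nat.factorial n : ℝ) ≠ 0 := Nat.cast_ne_zero.mpr (Nat.factorial_ne_zero n)
  field_simp
  ring
end

section
/- Let N ≥ 3 and define G_N(t) = ∑_{i=0}^{N+3} ((N+3)!/(2^{N-i+3} · i!)) · (t/(1+t))^{N+4-i}. Then G_N satisfies the differential equation (t² + t³)·G_N'(t) + (2 - (N+2)t)·G_N(t) - 2t = 0 on a neighborhood of any t where 1 + t ≠ 0 and t ≠ 0, and G_N(0) = 0. -/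
private lemma gf_aux (t P a b Nr kr : ℝ) (h1t : 1 + t ≠ 0)
    (hab : (Nr + 2 - kr + 1) * b = 2 * a) :
    (t ^ 2 + t ^ 3) * (a * ((kr + 2) * P * ((1 * (1 + t) - t * (0 + 1)) / (1 + t) ^ 2)))
      + (2 - (Nr + 2) * t) * (a * (P * (t / (1 + t))))
    = t * (Nr + 2 - kr + 1) * b * P - t * (Nr + 2 - kr) * a * (P * (t / (1 + t))) := by
  have hb : t * (Nr + 2 - kr + 1) * b * P = t * (2 * a) * P := by
    rw [mul_assoc t, hab]
  rw [hb]
  field_simp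
  ring

/-- The generating function `G_N(t) = ∑_{i=0}^{N+3} ((N+3)!/(2^{N-i+3}·i!))·(t/(1+t))^{N+4-i}`
satisfies `(t²+t³)·G_N'(t) + (2-(N+2)t)·G_N(t) - 2t = 0` wherever `t ≠ 0` and `1+t ≠ 0`,
and `G_N(0) = 0`. -/
theorem generating_function_ODE (N : ℕ) (hN : 3 ≤ N) :
    (∀ t : ℝ, t ≠ 0 → 1 + t ≠ 0 →
      (t ^ 2 + t ^ 3) * deriv (fun s : ℝ => ∑ i ∈ Finset.range (N + 4),
          ((Nat.factorial (N + 3) : ℝ) / (2 ^ (N + 3 - i) * (Nat.factorial i : ℝ)))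
            * (s / (1 + s)) ^ (N + 4 - i)) t
        + (2 - ((N : ℝ) + 2) * t) * (∑ i ∈ Finset.range (N + 4),
          ((Nat.factorial (N + 3) : ℝ) / (2 ^ (N + 3 - i) * (Nat.factorial i : ℝ)))
            * (t / (1 + t)) ^ (N + 4 - i)) - 2 * t = 0) ∧
    (∑ i ∈ Finset.range (N + 4),
        ((Nat.factorial (N + 3) : ℝ) / (2 ^ (N + 3 - i) * (Nat.factorial i : ℝ)))
          * ((0 : ℝ) / (1 + 0)) ^ (N + 4 - i)) = 0 := by
  constructor
  · intro t ht h1t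
    have hderiv : HasDerivAt (fun s : ℝ => ∑ i ∈ Finset.range (N + 4),
        ((Nat.factorial (N + 3) : ℝ) / (2 ^ (N + 3 - i) * (Nat.factorial i : ℝ)))
          * (s / (1 + s)) ^ (N + 4 - i))
        (∑ i ∈ Finset.range (N + 4),
          ((Nat.factorial (N + 3) : ℝ) / (2 ^ (N + 3 - i) * (Nat.factorial i : ℝ)))
            * (((N + 4 - i : ℕ) : ℝ) * (t / (1 + t)) ^ (N + 4 - i - 1) *
              ((1 * (1 + t) - t * (0 + 1)) / (1 + t) ^ 2))) t := by
      apply HasDerivAt.fun_sum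
      intro i _
      exact (((hasDerivAt_id t).div ((hasDerivAt_const t 1).add (hasDerivAt_id t))
        h1t).pow _).const_mul _
    rw [hderiv.deriv, sub_eq_zero, Finset.mul_sum, Finset.mul_sum,
      ← Finset.sum_add_distrib]
    set g : ℕ → ℝ := fun i => if i = N + 4 then 2 * t else
      t * (i : ℝ) * ((Nat.factorial (N + 3) : ℝ) / (2 ^ (N + 3 - i) * (Nat.factorial i : ℝ)))
        * (t / (1 + t)) ^ (N + 4 - i) with hg
    have h2t : (2 * t : ℝ) = g (N + 4) - g 0 := by simp [hg]
    rw [h2t, ← Finset.sum_range_sub g]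
    apply Finset.sum_congr rfl
    intro i hi
    simp only [Finset.mem_range] at hi
    have hfac : (Nat.factorial i : ℝ) ≠ 0 := Nat.cast_ne_zero.2 (Nat.factorial_ne_zero i)
    by_cases hlast : i = N + 3
    · subst hlast
      have e1 : N + 4 - (N + 3) = 1 := by omega
      have e2 : N + 4 - (N + 3) - 1 = 0 := by omega
      have e3 : N + 3 - (N + 3) = 0 := by omega
      have hF : (Nat.factorial (N + 3) : ℝ) ≠ 0 :=
        Nat.cast_ne_zero.2 (Nat.factorial_ne_zero _)
      simp only [hg, if_pos rfl, if_neg (by omega : ¬ N + 3 = N + 4), e1, e2, e3]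
      push_cast
      field_simp
      ring
    · -- i < N + 3
      obtain ⟨k, hk⟩ : ∃ k, N + 2 = i + k := ⟨N + 2 - i, by omega⟩
      have e1 : N + 4 - i = k + 2 := by omega
      have e2 : N + 4 - i - 1 = k + 1 := by omega
      have e3 : N + 3 - i = k + 1 := by omega
      have e4 : N + 4 - (i + 1) = k + 1 := by omega
      have e5 : N + 3 - (i + 1) = k := by omega
      have h2k : (2 : ℝ) ^ k ≠ 0 := by positivity
      have hi1 : ((i : ℝ) + 1) ≠ 0 := by positivity
      simp only [hg, if_neg (by omega : ¬ i = N + 4), if_neg (by omega : ¬ i + 1 = N + 4),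
        e1, e2, e3, e4, e5]
      have hicast : (i : ℝ) = (N : ℝ) + 2 - (k : ℝ) := by
        have : ((N : ℝ) + 2) = (i : ℝ) + (k : ℝ) := by
          exact_mod_cast congrArg (Nat.cast (R := ℝ)) hk
        linarith
      have hab : ((N : ℝ) + 2 - (k : ℝ) + 1) *
          ((Nat.factorial (N + 3) : ℝ) / (2 ^ k * (Nat.factorial (i + 1) : ℝ)))
          = 2 * ((Nat.factorial (N + 3) : ℝ) / (2 ^ (k + 1) * (Nat.factorial i : ℝ))) := by
        rw [← hicast, show Nat.factorial (i + 1) = (i + 1) * Nat.factorial i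
          from Nat.factorial_succ i, pow_succ]
        push_cast
        field_simp
      rw [show ((t / (1 + t)) ^ (k + 2) : ℝ) = (t / (1 + t)) ^ (k + 1) * (t / (1 + t))
        from pow_succ _ (k + 1)]
      push_cast
      rw [hicast]
      exact gf_aux t _ _ _ _ _ h1t hab
  · apply Finset.sum_eq_zero
    intro i hi
    simp only [Finset.mem_range] at hi
    rw [zero_div, zero_pow (by omega : N + 4 - i ≠ 0), mul_zero]
end
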